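/- arXiv:1311.1411 — 2 statements merged into one kernel-verified Lean document; each statement's English description precedes it below -/
import Mathlib

section
/- (Random-coding bound via Jensen's inequality.) Let Q_X be a distribution on a finite set 𝒳 and Q_{Z|X} a channel from 𝒳 to a finite set 𝒵, with Q_Z(z) = Σ_x Q_X(x) Q_{Z|X}(z|x). Fix positive integers L and L₁. Let M be uniform on {1,…,L}, W uniform on {1,…,L₁}, let the codewords X(m,w), (m,w) ∈ {1,…,L}×{1,…,L₁}, be i.i.d. with distribution Q_X and independent of (M,W), and let Z be drawn from Q_{Z|X}(·|X(M,W)). Then the expected divergence satisfies E[ D(P_{MZ|𝒞} || P_M × Q_Z) ] = E[ log( Σ_{j=1}^{L₁} Q_{Z|X}(Z | X(M,j)) / (L₁ · Q_Z(Z)) ) ] ≤ E[ log( Q_{Z|X}(Z'|X') / (L₁ · Q_Z(Z')) + 1 ) ], where on the right-hand side (X',Z') is a pair with X' ~ Q_X and Z' ~ Q_{Z|X}(·|X'), and P_{MZ|𝒞} denotes the joint distribution of (M,Z) conditioned on the realized codebook 𝒞. -/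
open Finset

lemma sum_pi_prod {α σ : Type*} [Fintype α] [Fintype σ] [DecidableEq σ]
    (p : α → ℝ) (hp : ∑ x, p x = 1) :
    ∑ e : σ → α, ∏ j, p (e j) = 1 := by
  rw [← Fintype.prod_sum (fun (_ : σ) (x : α) => p x)]
  simp [hp]

lemma sum_split2 {ι α : Type*} [Fintype ι] [DecidableEq ι] [Fintype α] [DecidableEq α] (i : ι)
    (p : α → ℝ) (g : α → ({j : ι // j ≠ i} → α) → ℝ) :
    ∑ c : ι → α, (∏ k, p (c k)) * g (c i) (fun j => c j.1)
      = ∑ x : α, p x * ∑ e : {j : ι // j ≠ i} → α, (∏ j, p (e j)) * g x e := by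
  classical
  rw [← ((Equiv.funSplitAt i α).symm.sum_comp
      (fun c => (∏ k, p (c k)) * g (c i) (fun j => c j.1)))]
  rw [Fintype.sum_prod_type]
  refine Finset.sum_congr rfl fun x _ => ?_
  rw [Finset.mul_sum]
  refine Finset.sum_congr rfl fun e _ => ?_
  have hi : (Equiv.funSplitAt i α).symm (x, e) i = x := by simp
  have hj : ∀ j : {j : ι // j ≠ i}, (Equiv.funSplitAt i α).symm (x, e) j.1 = e j := by
    intro j
    simp [Equiv.funSplitAt, Equiv.piSplitAt, j.2]
  have harg : (fun j : {j : ι // j ≠ i} => (Equiv.funSplitAt i α).symm (x, e) j.1) = e :=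
    funext hj
  have hprod : ∏ k, p ((Equiv.funSplitAt i α).symm (x, e) k)
      = p x * ∏ j : {j : ι // j ≠ i}, p (e j) := by
    rw [← Finset.mul_prod_erase Finset.univ _ (Finset.mem_univ i), hi]
    congr 1
    rw [Finset.prod_subtype (Finset.univ.erase i)
      (p := fun j => j ≠ i) (fun j => by simp [Finset.mem_erase])
      (fun k => p ((Equiv.funSplitAt i α).symm (x, e) k))]
    exact Finset.prod_congr rfl fun j _ => by rw [hj]
  rw [hprod, hi, harg, mul_assoc]

lemma sum_split {ι α : Type*} [Fintype ι] [DecidableEq ι] [Fintype α] [DecidableEq α] (i : ι)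
    (p : α → ℝ) (hp : ∑ x, p x = 1) (g : α → ℝ) :
    ∑ c : ι → α, (∏ k, p (c k)) * g (c i) = ∑ x : α, p x * g x := by
  have h := sum_split2 (α := α) i p (fun x _ => g x)
  simpa only [← Finset.sum_mul, sum_pi_prod p hp, one_mul] using h

lemma jensen_log {ι : Type*} [Fintype ι] (p y : ι → ℝ) (hp : ∀ i, 0 ≤ p i)
    (hp1 : ∑ i, p i = 1) (hy : ∀ i, 0 < y i) :
    ∑ i, p i * Real.log (y i) ≤ Real.log (∑ i, p i * y i) := by
  set Y := ∑ i, p i * y i with hYdef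
  have hY : 0 < Y := by
    obtain ⟨i, hi⟩ : ∃ i, p i ≠ 0 := by
      by_contra h; push_neg at h; simp [h] at hp1
    exact lt_of_lt_of_le (mul_pos (lt_of_le_of_ne (hp i) (Ne.symm hi)) (hy i))
      (Finset.single_le_sum (fun j _ => mul_nonneg (hp j) (hy j).le) (Finset.mem_univ i))
  have key : ∀ i, p i * Real.log (y i) ≤ p i * Real.log Y + (p i * y i / Y - p i) := by
    intro i
    rcases eq_or_lt_of_le (hp i) with h0 | h0
    · simp [← h0]
    · have h1 : Real.log (y i / Y) ≤ y i / Y - 1 :=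
        Real.log_le_sub_one_of_pos (div_pos (hy i) hY)
      have h2 : Real.log (y i / Y) = Real.log (y i) - Real.log Y :=
        Real.log_div (hy i).ne' hY.ne'
      have hlog : Real.log (y i) ≤ Real.log Y + (y i / Y - 1) := by linarith
      calc p i * Real.log (y i) ≤ p i * (Real.log Y + (y i / Y - 1)) :=
            mul_le_mul_of_nonneg_left hlog (hp i)
        _ = p i * Real.log Y + (p i * y i / Y - p i) := by ring
  calc ∑ i, p i * Real.log (y i)
      ≤ ∑ i, (p i * Real.log Y + (p i * y i / Y - p i)) := Finset.sum_le_sum fun i _ => key i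
    _ = (∑ i, p i) * Real.log Y + ((∑ i, p i * y i) / Y - ∑ i, p i) := by
        rw [Finset.sum_add_distrib, Finset.sum_sub_distrib, ← Finset.sum_mul, ← Finset.sum_div]
    _ = Real.log Y := by rw [hp1, ← hYdef, div_self hY.ne']; ring

lemma jensen_logb {ι : Type*} [Fintype ι] (p y : ι → ℝ) (hp : ∀ i, 0 ≤ p i)
    (hp1 : ∑ i, p i = 1) (hy : ∀ i, 0 < y i) :
    ∑ i, p i * Real.logb 2 (y i) ≤ Real.logb 2 (∑ i, p i * y i) := by
  have h2 : (0:ℝ) < Real.log 2 := Real.log_pos one_lt_two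
  simp only [Real.logb, ← mul_div_assoc, ← Finset.sum_div]
  exact div_le_div_of_nonneg_right (jensen_log p y hp hp1 hy) h2.le


/-- Informational divergence (in bits) between two distributions on a finite set,
with the convention `0 * logb 2 (0/q) = 0` so the sum effectively runs over `supp P`. -/
noncomputable def KL {α : Type*} [Fintype α] (P Q : α → ℝ) : ℝ :=
  ∑ x, P x * Real.logb 2 (P x / Q x)

/-- `P` is a probability distribution on a finite set. -/
def IsDist {α : Type*} [Fintype α] (P : α → ℝ) : Prop :=
  (∀ x, 0 ≤ P x) ∧ ∑ x, P x = 1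

set_option maxHeartbeats 1600000 in
/-- random-coding bound via Jensen's inequality.
`M` is uniform on `Fin L`, `W` uniform on `Fin L₁`, the codewords `c (m,w)` are i.i.d. `Q_X`
(so the codebook `c : Fin L × Fin L₁ → 𝒳` has probability `∏ k, Q_X (c k)`), and for a fixed
codebook the induced joint distribution of `(M,Z)` is
`P_{MZ|𝒞}(m,z) = (1/L) ∑_w (1/L₁) Q_{Z|X}(z | c(m,w))`.  Then
`E[D(P_{MZ|𝒞} || P_M × Q_Z)]
  = E[ log( Σ_j Q_{Z|X}(Z|X(M,j)) / (L₁ Q_Z(Z)) ) ]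
  ≤ E[ log( Q_{Z|X}(Z'|X')/(L₁ Q_Z(Z')) + 1 ) ]` with `X' ~ Q_X`, `Z' ~ Q_{Z|X}(·|X')`. -/
theorem stmt2 {Xc Zc : Type*} [Fintype Xc] [Fintype Zc] [DecidableEq Xc]
    (QX : Xc → ℝ) (hQX : IsDist QX)
    (QZX : Xc → Zc → ℝ) (hQZX : ∀ x, IsDist (QZX x))
    (QZ : Zc → ℝ) (hQZ : ∀ z, QZ z = ∑ x, QX x * QZX x z)
    (L L₁ : ℕ) (hL : 0 < L) (hL₁ : 0 < L₁) :
    (∑ c : Fin L × Fin L₁ → Xc, (∏ k, QX (c k)) *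
        KL (fun mz : Fin L × Zc => (1 / (L : ℝ)) * ∑ w, (1 / (L₁ : ℝ)) * QZX (c (mz.1, w)) mz.2)
           (fun mz : Fin L × Zc => (1 / (L : ℝ)) * QZ mz.2))
      = (∑ c : Fin L × Fin L₁ → Xc, (∏ k, QX (c k)) *
          ∑ m : Fin L, ∑ w : Fin L₁, ∑ z : Zc,
            (1 / ((L : ℝ) * (L₁ : ℝ))) * QZX (c (m, w)) z *
              Real.logb 2 ((∑ j : Fin L₁, QZX (c (m, j)) z) / ((L₁ : ℝ) * QZ z)))
    ∧ (∑ c : Fin L × Fin L₁ → Xc, (∏ k, QX (c k)) *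
          ∑ m : Fin L, ∑ w : Fin L₁, ∑ z : Zc,
            (1 / ((L : ℝ) * (L₁ : ℝ))) * QZX (c (m, w)) z *
              Real.logb 2 ((∑ j : Fin L₁, QZX (c (m, j)) z) / ((L₁ : ℝ) * QZ z)))
        ≤ ∑ x : Xc, ∑ z : Zc, QX x * QZX x z *
            Real.logb 2 (QZX x z / ((L₁ : ℝ) * QZ z) + 1) := by
  obtain ⟨hQX1, hQX2⟩ := hQX
  have hQX : (∀ x, 0 ≤ QX x) ∧ ∑ x, QX x = 1 := ⟨hQX1, hQX2⟩
  have hQZX' : ∀ x, (∀ z, 0 ≤ QZX x z) ∧ ∑ z, QZX x z = 1 := fun x => ⟨(hQZX x).1, (hQZX x).2⟩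
  constructor
  · -- equality
      have hL0 : (L : ℝ) ≠ 0 := Nat.cast_ne_zero.mpr hL.ne'
      refine Finset.sum_congr rfl fun c _ => ?_
      congr 1
      unfold KL
      rw [Fintype.sum_prod_type]
      refine Finset.sum_congr rfl fun m _ => ?_
      have step : ∀ z : Zc,
          (1 / (L : ℝ) * ∑ w, (1 / (L₁ : ℝ)) * QZX (c (m, w)) z) *
            Real.logb 2 ((1 / (L : ℝ) * ∑ w, (1 / (L₁ : ℝ)) * QZX (c (m, w)) z)
              / (1 / (L : ℝ) * QZ z))
          = ∑ w : Fin L₁,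
              (1 / ((L : ℝ) * (L₁ : ℝ))) * QZX (c (m, w)) z *
                Real.logb 2 ((∑ j : Fin L₁, QZX (c (m, j)) z) / ((L₁ : ℝ) * QZ z)) := by
        intro z
        have harg : (1 / (L : ℝ) * ∑ w, (1 / (L₁ : ℝ)) * QZX (c (m, w)) z)
              / (1 / (L : ℝ) * QZ z)
            = (∑ j : Fin L₁, QZX (c (m, j)) z) / ((L₁ : ℝ) * QZ z) := by
          rw [mul_div_mul_left _ _ (one_div_ne_zero hL0), ← Finset.mul_sum,
            one_div_mul_eq_div, div_div]
        rw [harg, Finset.mul_sum, Finset.sum_mul]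
        exact Finset.sum_congr rfl fun w _ => by ring
      calc ∑ z : Zc, (fun mz : Fin L × Zc => (1 / (L : ℝ)) * ∑ w, (1 / (L₁ : ℝ)) * QZX (c (mz.1, w)) mz.2) (m, z) *
            Real.logb 2 ((fun mz : Fin L × Zc => (1 / (L : ℝ)) * ∑ w, (1 / (L₁ : ℝ)) * QZX (c (mz.1, w)) mz.2) (m, z)
              / (fun mz : Fin L × Zc => (1 / (L : ℝ)) * QZ mz.2) (m, z))
          = ∑ z : Zc, ∑ w : Fin L₁,
              (1 / ((L : ℝ) * (L₁ : ℝ))) * QZX (c (m, w)) z *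
                Real.logb 2 ((∑ j : Fin L₁, QZX (c (m, j)) z) / ((L₁ : ℝ) * QZ z)) :=
            Finset.sum_congr rfl fun z _ => step z
        _ = _ := Finset.sum_comm
  · -- inequality
      classical
      have hL0 : (0:ℝ) < L := Nat.cast_pos.mpr hL
      have hL₁0 : (0:ℝ) < L₁ := Nat.cast_pos.mpr hL₁
      set R : ℝ := ∑ x : Xc, ∑ z : Zc, QX x * QZX x z *
          Real.logb 2 (QZX x z / ((L₁ : ℝ) * QZ z) + 1) with hRdef
      -- main per-(m,w) bound
      have main : ∀ (m : Fin L) (w : Fin L₁),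
          (∑ c : Fin L × Fin L₁ → Xc, (∏ k, QX (c k)) *
            ∑ z : Zc, QZX (c (m, w)) z *
              Real.logb 2 ((∑ j : Fin L₁, QZX (c (m, j)) z) / ((L₁ : ℝ) * QZ z))) ≤ R := by
        intro m w
        -- Step A: marginalize out rows other than m
        have stepA : (∑ c : Fin L × Fin L₁ → Xc, (∏ k, QX (c k)) *
              ∑ z : Zc, QZX (c (m, w)) z *
                Real.logb 2 ((∑ j : Fin L₁, QZX (c (m, j)) z) / ((L₁ : ℝ) * QZ z)))
            = ∑ d : Fin L₁ → Xc, (∏ j, QX (d j)) *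
                ∑ z : Zc, QZX (d w) z *
                  Real.logb 2 ((∑ j : Fin L₁, QZX (d j) z) / ((L₁ : ℝ) * QZ z)) := by
          rw [← ((Equiv.curry (Fin L) (Fin L₁) Xc).symm.sum_comp
            (fun c : Fin L × Fin L₁ → Xc => (∏ k, QX (c k)) *
              ∑ z : Zc, QZX (c (m, w)) z *
                Real.logb 2 ((∑ j : Fin L₁, QZX (c (m, j)) z) / ((L₁ : ℝ) * QZ z))))]
          simp only [Equiv.curry_symm_apply, Function.uncurry_apply_pair, Fintype.prod_prod_type]
          exact sum_split (ι := Fin L) (α := Fin L₁ → Xc) m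
            (fun d => ∏ j, QX (d j)) (sum_pi_prod QX hQX.2)
            (fun d => ∑ z : Zc, QZX (d w) z *
              Real.logb 2 ((∑ j : Fin L₁, QZX (d j) z) / ((L₁ : ℝ) * QZ z)))
        rw [stepA]
        -- Step B: split off coordinate w
        have hsum : ∀ (d : Fin L₁ → Xc) (z : Zc), (∑ j : Fin L₁, QZX (d j) z)
            = QZX (d w) z + ∑ j : {j : Fin L₁ // j ≠ w}, QZX (d j.1) z := by
          intro d z
          rw [← Finset.add_sum_erase Finset.univ _ (Finset.mem_univ w)]
          congr 1
          rw [Finset.sum_subtype (Finset.univ.erase w)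
            (p := fun j => j ≠ w) (fun j => by simp [Finset.mem_erase])
            (fun j => QZX (d j) z)]
        have stepB : (∑ d : Fin L₁ → Xc, (∏ j, QX (d j)) *
              ∑ z : Zc, QZX (d w) z *
                Real.logb 2 ((∑ j : Fin L₁, QZX (d j) z) / ((L₁ : ℝ) * QZ z)))
            = ∑ x : Xc, QX x * ∑ e : {j : Fin L₁ // j ≠ w} → Xc, (∏ j, QX (e j)) *
                ∑ z : Zc, QZX x z *
                  Real.logb 2 ((QZX x z + ∑ j : {j : Fin L₁ // j ≠ w}, QZX (e j) z)
                    / ((L₁ : ℝ) * QZ z)) := by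
          rw [show (∑ d : Fin L₁ → Xc, (∏ j, QX (d j)) *
              ∑ z : Zc, QZX (d w) z *
                Real.logb 2 ((∑ j : Fin L₁, QZX (d j) z) / ((L₁ : ℝ) * QZ z)))
            = ∑ d : Fin L₁ → Xc, (∏ j, QX (d j)) *
                (fun (x : Xc) (e : {j : Fin L₁ // j ≠ w} → Xc) => ∑ z : Zc, QZX x z *
                  Real.logb 2 ((QZX x z + ∑ j : {j : Fin L₁ // j ≠ w}, QZX (e j) z)
                    / ((L₁ : ℝ) * QZ z))) (d w) (fun j => d j.1)
            from Finset.sum_congr rfl fun d _ => by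
              simp only
              congr 1
              exact Finset.sum_congr rfl fun z _ => by rw [hsum d z]]
          exact sum_split2 w QX (fun x e => ∑ z : Zc, QZX x z *
            Real.logb 2 ((QZX x z + ∑ j : {j : Fin L₁ // j ≠ w}, QZX (e j) z) / ((L₁ : ℝ) * QZ z)))
        rw [stepB, hRdef]
        -- Step C: pointwise bound via Jensen
        have hRform : (∑ x : Xc, ∑ z : Zc, QX x * QZX x z *
              Real.logb 2 (QZX x z / ((L₁ : ℝ) * QZ z) + 1))
            = ∑ x : Xc, QX x * ∑ z : Zc, QZX x z *
                Real.logb 2 (QZX x z / ((L₁ : ℝ) * QZ z) + 1) := by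
          refine Finset.sum_congr rfl fun x _ => ?_
          rw [Finset.mul_sum]
          exact Finset.sum_congr rfl fun z _ => by ring
        rw [hRform]
        refine Finset.sum_le_sum fun x _ => ?_
        rcases eq_or_lt_of_le (hQX.1 x) with h0 | hx
        · simp [← h0]
        refine mul_le_mul_of_nonneg_left ?_ (hQX.1 x)
        calc ∑ e : {j : Fin L₁ // j ≠ w} → Xc, (∏ j, QX (e j)) *
                ∑ z : Zc, QZX x z *
                  Real.logb 2 ((QZX x z + ∑ j : {j : Fin L₁ // j ≠ w}, QZX (e j) z)
                    / ((L₁ : ℝ) * QZ z))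
            = ∑ e : {j : Fin L₁ // j ≠ w} → Xc, ∑ z : Zc, (∏ j, QX (e j)) *
                (QZX x z * Real.logb 2 ((QZX x z + ∑ j : {j : Fin L₁ // j ≠ w}, QZX (e j) z)
                    / ((L₁ : ℝ) * QZ z))) :=
              Finset.sum_congr rfl fun e _ => Finset.mul_sum _ _ _
          _ = ∑ z : Zc, ∑ e : {j : Fin L₁ // j ≠ w} → Xc, (∏ j, QX (e j)) *
                (QZX x z * Real.logb 2 ((QZX x z + ∑ j : {j : Fin L₁ // j ≠ w}, QZX (e j) z)
                    / ((L₁ : ℝ) * QZ z))) := Finset.sum_comm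
          _ ≤ ∑ z : Zc, QZX x z * Real.logb 2 (QZX x z / ((L₁ : ℝ) * QZ z) + 1) := by
            refine Finset.sum_le_sum fun z _ => ?_
            by_cases hq : QZX x z = 0
            · simp [hq]
            have hqpos : 0 < QZX x z := lt_of_le_of_ne ((hQZX' x).1 z) (Ne.symm hq)
            have hQZpos : 0 < QZ z := by
              rw [hQZ z]
              exact lt_of_lt_of_le (mul_pos hx hqpos)
                (Finset.single_le_sum
                  (fun x' _ => mul_nonneg (hQX.1 x') ((hQZX' x').1 z)) (Finset.mem_univ x))
            have hD : 0 < (L₁ : ℝ) * QZ z := mul_pos hL₁0 hQZpos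
            have hpe : ∀ e : {j : Fin L₁ // j ≠ w} → Xc, 0 ≤ ∏ j, QX (e j) :=
              fun e => Finset.prod_nonneg fun j _ => hQX.1 _
            have hpe1 : ∑ e : {j : Fin L₁ // j ≠ w} → Xc, ∏ j, QX (e j) = 1 :=
              sum_pi_prod QX hQX.2
            have hy : ∀ e : {j : Fin L₁ // j ≠ w} → Xc,
                0 < (QZX x z + ∑ j : {j : Fin L₁ // j ≠ w}, QZX (e j) z) / ((L₁ : ℝ) * QZ z) :=
              fun e => div_pos (lt_of_lt_of_le hqpos
                (le_add_of_nonneg_right (Finset.sum_nonneg fun j _ => (hQZX' _).1 z))) hD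
            have h1 : ∑ e : {j : Fin L₁ // j ≠ w} → Xc, (∏ j, QX (e j)) *
                  (QZX x z * Real.logb 2 ((QZX x z + ∑ j : {j : Fin L₁ // j ≠ w}, QZX (e j) z)
                    / ((L₁ : ℝ) * QZ z)))
                = QZX x z * ∑ e : {j : Fin L₁ // j ≠ w} → Xc, (∏ j, QX (e j)) *
                  Real.logb 2 ((QZX x z + ∑ j : {j : Fin L₁ // j ≠ w}, QZX (e j) z)
                    / ((L₁ : ℝ) * QZ z)) := by
              rw [Finset.mul_sum]
              exact Finset.sum_congr rfl fun e _ => by ring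
            rw [h1]
            refine mul_le_mul_of_nonneg_left ?_ hqpos.le
            refine le_trans (jensen_logb (fun e : {j : Fin L₁ // j ≠ w} → Xc => ∏ j, QX (e j))
              (fun e => (QZX x z + ∑ j : {j : Fin L₁ // j ≠ w}, QZX (e j) z) / ((L₁ : ℝ) * QZ z))
              hpe hpe1 hy) ?_
            have hmean : ∑ e : {j : Fin L₁ // j ≠ w} → Xc, (∏ j, QX (e j)) *
                  ((QZX x z + ∑ j : {j : Fin L₁ // j ≠ w}, QZX (e j) z) / ((L₁ : ℝ) * QZ z))
                = (QZX x z + ∑ _j : {j : Fin L₁ // j ≠ w}, QZ z) / ((L₁ : ℝ) * QZ z) := by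
              simp only [← mul_div_assoc, ← Finset.sum_div]
              congr 1
              simp only [mul_add]
              rw [Finset.sum_add_distrib, ← Finset.sum_mul, hpe1, one_mul]
              congr 1
              calc ∑ e : {j : Fin L₁ // j ≠ w} → Xc, (∏ j', QX (e j')) *
                    ∑ j : {j : Fin L₁ // j ≠ w}, QZX (e j) z
                  = ∑ e : {j : Fin L₁ // j ≠ w} → Xc, ∑ j : {j : Fin L₁ // j ≠ w},
                      (∏ j', QX (e j')) * QZX (e j) z :=
                    Finset.sum_congr rfl fun e _ => Finset.mul_sum _ _ _
                _ = ∑ j : {j : Fin L₁ // j ≠ w}, ∑ e : {j : Fin L₁ // j ≠ w} → Xc,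
                      (∏ j', QX (e j')) * QZX (e j) z := Finset.sum_comm
                _ = ∑ _j : {j : Fin L₁ // j ≠ w}, QZ z := by
                    refine Finset.sum_congr rfl fun j _ => ?_
                    rw [sum_split j QX hQX.2 (fun x' => QZX x' z), ← hQZ z]
            rw [hmean]
            have hSnn : (0:ℝ) ≤ ∑ _j : {j : Fin L₁ // j ≠ w}, QZ z :=
              Finset.sum_nonneg fun _ _ => hQZpos.le
            have hcard : (∑ _j : {j : Fin L₁ // j ≠ w}, QZ z) ≤ (L₁ : ℝ) * QZ z := by
              rw [Finset.sum_const, Finset.card_univ, nsmul_eq_mul]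
              refine mul_le_mul_of_nonneg_right ?_ hQZpos.le
              exact_mod_cast (Fintype.card_subtype_le _).trans_eq (Fintype.card_fin L₁)
            have hfin : (QZX x z + ∑ _j : {j : Fin L₁ // j ≠ w}, QZ z) / ((L₁ : ℝ) * QZ z)
                ≤ QZX x z / ((L₁ : ℝ) * QZ z) + 1 := by
              have hone : QZX x z / ((L₁ : ℝ) * QZ z) + 1
                  = (QZX x z + (L₁ : ℝ) * QZ z) / ((L₁ : ℝ) * QZ z) := by
                field_simp
              rw [hone]
              gcongr
            exact Real.logb_le_logb_of_le one_lt_two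
              (div_pos (by linarith) hD) hfin
      -- Assembly
      have e1 : (∑ c : Fin L × Fin L₁ → Xc, (∏ k, QX (c k)) *
            ∑ m : Fin L, ∑ w : Fin L₁, ∑ z : Zc,
              (1 / ((L : ℝ) * (L₁ : ℝ))) * QZX (c (m, w)) z *
                Real.logb 2 ((∑ j : Fin L₁, QZX (c (m, j)) z) / ((L₁ : ℝ) * QZ z)))
          = ∑ c : Fin L × Fin L₁ → Xc, ∑ m : Fin L, ∑ w : Fin L₁,
              (1 / ((L : ℝ) * (L₁ : ℝ))) * ((∏ k, QX (c k)) *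
                ∑ z : Zc, QZX (c (m, w)) z *
                  Real.logb 2 ((∑ j : Fin L₁, QZX (c (m, j)) z) / ((L₁ : ℝ) * QZ z))) := by
        refine Finset.sum_congr rfl fun c _ => ?_
        rw [Finset.mul_sum]
        refine Finset.sum_congr rfl fun m _ => ?_
        rw [Finset.mul_sum]
        refine Finset.sum_congr rfl fun w _ => ?_
        simp only [Finset.mul_sum]
        refine Finset.sum_congr rfl fun z _ => ?_
        ring
      rw [e1, Finset.sum_comm]
      calc ∑ m : Fin L, ∑ c : Fin L × Fin L₁ → Xc, ∑ w : Fin L₁,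
            (1 / ((L : ℝ) * (L₁ : ℝ))) * ((∏ k, QX (c k)) *
              ∑ z : Zc, QZX (c (m, w)) z *
                Real.logb 2 ((∑ j : Fin L₁, QZX (c (m, j)) z) / ((L₁ : ℝ) * QZ z)))
          = ∑ m : Fin L, ∑ w : Fin L₁, ∑ c : Fin L × Fin L₁ → Xc,
            (1 / ((L : ℝ) * (L₁ : ℝ))) * ((∏ k, QX (c k)) *
              ∑ z : Zc, QZX (c (m, w)) z *
                Real.logb 2 ((∑ j : Fin L₁, QZX (c (m, j)) z) / ((L₁ : ℝ) * QZ z))) :=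
            Finset.sum_congr rfl fun m _ => Finset.sum_comm
        _ ≤ ∑ m : Fin L, ∑ w : Fin L₁, (1 / ((L : ℝ) * (L₁ : ℝ))) * R := by
            refine Finset.sum_le_sum fun m _ => Finset.sum_le_sum fun w _ => ?_
            rw [← Finset.mul_sum]
            exact mul_le_mul_of_nonneg_left (main m w) (by positivity)
        _ = R := by
            simp only [Finset.sum_const, Finset.card_univ, Fintype.card_fin, nsmul_eq_mul]
            field_simp
end

section
/- (Step (c) of the converse.) For a fixed channel Q_{YZ|X} on finite alphabets, max over joint distributions Q_{UVX} (with Markov chain (U,V) − X − (Y,Z)) of I(V;Y|U) − I(V;Z|U) equals max over joint distributions Q_{VX} (with Markov chain V − X − (Y,Z)) of I(V;Y) − I(V;Z); i.e., conditioning on an auxiliary variable U cannot increase the maximum of the difference of mutual informations. -/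
open Finset

/-- Distribution (pushforward) of the random variable `X` on the finite probability
space `(Ω, p)`. -/
noncomputable def distOf {Ω S : Type*} [Fintype Ω] [DecidableEq S]
    (p : Ω → ℝ) (X : Ω → S) : S → ℝ :=
  fun s => ∑ ω, if X ω = s then p ω else 0

/-- Mutual information `I(X;Y) = D(P_{XY} || P_X × P_Y)` of two random variables on a
finite probability space `(Ω, p)`. -/
noncomputable def miRV {Ω S T : Type*} [Fintype Ω] [Fintype S] [Fintype T]
    [DecidableEq S] [DecidableEq T] (p : Ω → ℝ) (X : Ω → S) (Y : Ω → T) : ℝ :=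
  KL (distOf p (fun ω => (X ω, Y ω))) (fun st => distOf p X st.1 * distOf p Y st.2)

/-- The conditional probability mass function on `Ω` given `Z = u`. -/
noncomputable def condPMF {Ω U : Type*} [Fintype Ω] [DecidableEq U]
    (p : Ω → ℝ) (Z : Ω → U) (u : U) : Ω → ℝ :=
  fun ω => if Z ω = u then p ω / distOf p Z u else 0

/-- Conditional mutual information `I(X;Y|Z) = Σ_u P_Z(u) · I(X;Y | Z = u)`. -/
noncomputable def cmiRV {Ω S T U : Type*} [Fintype Ω] [Fintype S] [Fintype T] [Fintype U]
    [DecidableEq S] [DecidableEq T] [DecidableEq U]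
    (p : Ω → ℝ) (X : Ω → S) (Y : Ω → T) (Z : Ω → U) : ℝ :=
  ∑ u, distOf p Z u * miRV (condPMF p Z u) X Y

lemma distOf_comp {Ω S T : Type*} [Fintype Ω] [Fintype S] [DecidableEq S] [DecidableEq T]
    (p : Ω → ℝ) (f : Ω → S) (g : S → T) :
    distOf p (fun ω => g (f ω)) = distOf (distOf p f) g := by
  funext t
  simp only [distOf]
  have : ∀ s : S, (if g s = t then (∑ ω, if f ω = s then p ω else 0) else 0)
      = ∑ ω, if f ω = s then (if g s = t then p ω else 0) else 0 := by
    intro s; split <;> simp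
  rw [Finset.sum_congr rfl fun s _ => this s, Finset.sum_comm]
  refine Finset.sum_congr rfl fun ω _ => ?_
  rw [Finset.sum_ite_eq Finset.univ (f ω) (fun s => if g s = t then p ω else 0)]
  simp

lemma distOf_sum {Ω S : Type*} [Fintype Ω] [Fintype S] [DecidableEq S]
    (p : Ω → ℝ) (X : Ω → S) : ∑ s, distOf p X s = ∑ ω, p ω := by
  simp only [distOf]
  rw [Finset.sum_comm]
  simp

lemma distOf_nonneg {Ω S : Type*} [Fintype Ω] [DecidableEq S]
    (p : Ω → ℝ) (hp : ∀ ω, 0 ≤ p ω) (X : Ω → S) (s : S) : 0 ≤ distOf p X s :=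
  Finset.sum_nonneg fun ω _ => by by_cases h : X ω = s <;> simp [h, hp ω]

lemma miRV_congr {Ω Ω' S T : Type*} [Fintype Ω] [Fintype Ω'] [Fintype S] [Fintype T]
    [DecidableEq S] [DecidableEq T]
    (p : Ω → ℝ) (q : Ω' → ℝ) (X : Ω → S) (Y : Ω → T) (X' : Ω' → S) (Y' : Ω' → T)
    (h : distOf p (fun ω => (X ω, Y ω)) = distOf q (fun ω => (X' ω, Y' ω))) :
    miRV p X Y = miRV q X' Y' := by
  have h1 : distOf p X = distOf q X' := by
    have e1 := distOf_comp p (fun ω => (X ω, Y ω)) Prod.fst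
    have e2 := distOf_comp q (fun ω => (X' ω, Y' ω)) Prod.fst
    exact e1.trans (by rw [h, ← e2])
  have h2 : distOf p Y = distOf q Y' := by
    have e1 := distOf_comp p (fun ω => (X ω, Y ω)) Prod.snd
    have e2 := distOf_comp q (fun ω => (X' ω, Y' ω)) Prod.snd
    exact e1.trans (by rw [h, ← e2])
  simp only [miRV, h, h1, h2]

lemma miRV_map {Ω Ω' S T : Type*} [Fintype Ω] [Fintype Ω'] [Fintype S] [Fintype T]
    [DecidableEq S] [DecidableEq T] [DecidableEq Ω']
    (p : Ω → ℝ) (m : Ω → Ω') (g1 : Ω' → S) (g2 : Ω' → T) :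
    miRV p (fun ω => g1 (m ω)) (fun ω => g2 (m ω)) = miRV (distOf p m) g1 g2 :=
  miRV_congr _ _ _ _ _ _ (distOf_comp p m (fun w => (g1 w, g2 w)))

lemma sSup_eq_sSup_of (A B : Set ℝ) (h1 : ∀ a ∈ A, ∃ b ∈ B, a ≤ b) (h2 : B ⊆ A) :
    sSup A = sSup B := by
  rcases A.eq_empty_or_nonempty with hA | hA
  · have : B = ∅ := Set.subset_empty_iff.mp (hA ▸ h2)
    rw [hA, this]
  · obtain ⟨a0, ha0⟩ := hA
    obtain ⟨b0, hb0, _⟩ := h1 a0 ha0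
    by_cases hB : BddAbove B
    · have hAb : BddAbove A := by
        obtain ⟨M, hM⟩ := hB
        exact ⟨M, fun a ha => by obtain ⟨b, hb, hab⟩ := h1 a ha; exact hab.trans (hM hb)⟩
      refine le_antisymm (csSup_le ⟨a0, ha0⟩ fun a ha => ?_) (csSup_le_csSup hAb ⟨b0, hb0⟩ h2)
      obtain ⟨b, hb, hab⟩ := h1 a ha
      exact hab.trans (le_csSup hB hb)
    · have hAb : ¬ BddAbove A := fun h => hB (h.mono h2)
      rw [Real.sSup_of_not_bddAbove hAb, Real.sSup_of_not_bddAbove hB]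

section main
variable {Xc Yc Zc : Type*} [Fintype Xc] [Fintype Yc] [Fintype Zc]
    [DecidableEq Yc] [DecidableEq Zc]

omit [DecidableEq Yc] [DecidableEq Zc] in
lemma chan_sum (Q : Xc → Yc × Zc → ℝ) (hQ : ∀ x, IsDist (Q x))
    {n : Type*} [Fintype n] (R : n × Xc → ℝ) :
    ∑ w : n × Xc × Yc × Zc, R (w.1, w.2.1) * Q w.2.1 (w.2.2.1, w.2.2.2) = ∑ t, R t := by
  simp only [Fintype.sum_prod_type]
  refine Finset.sum_congr rfl fun v _ => Finset.sum_congr rfl fun x _ => ?_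
  have h := (hQ x).2
  rw [Fintype.sum_prod_type] at h
  have hpull : (∑ y : Yc, ∑ z : Zc, R (v, x) * Q x (y, z))
      = R (v, x) * ∑ y : Yc, ∑ z : Zc, Q x (y, z) := by
    simp [Finset.mul_sum]
  rw [hpull, h, mul_one]

omit [DecidableEq Yc] [DecidableEq Zc] in
lemma pu_eq {nU nV : ℕ} (Q : Xc → Yc × Zc → ℝ) (hQ : ∀ x, IsDist (Q x))
    (QUVX : Fin nU × Fin nV × Xc → ℝ) (u : Fin nU) :
    distOf (fun ω : Fin nU × Fin nV × Xc × Yc × Zc =>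
        QUVX (ω.1, ω.2.1, ω.2.2.1) * Q ω.2.2.1 (ω.2.2.2.1, ω.2.2.2.2)) (fun ω => ω.1) u
    = ∑ t : Fin nV × Xc, QUVX (u, t.1, t.2) := by
  rw [distOf, Fintype.sum_prod_type]
  have key : ∀ u' : Fin nU,
      (∑ w : Fin nV × Xc × Yc × Zc, if (u', w).1 = u then
          QUVX ((u', w).1, (u', w).2.1, (u', w).2.2.1)
            * Q (u', w).2.2.1 ((u', w).2.2.2.1, (u', w).2.2.2.2) else 0)
      = if u' = u then ∑ t : Fin nV × Xc, QUVX (u, t.1, t.2) else 0 := by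
    intro u'
    by_cases h : u' = u
    · subst h
      simp only [if_pos rfl]
      exact chan_sum Q hQ (fun t => QUVX (u', t.1, t.2))
    · simp [h]
  rw [Finset.sum_congr rfl fun u' _ => key u']
  simp

omit [DecidableEq Yc] [DecidableEq Zc] in
lemma cond_push {nU nV : ℕ} (Q : Xc → Yc × Zc → ℝ)
    (QUVX : Fin nU × Fin nV × Xc → ℝ) (u : Fin nU)
    [DecidableEq (Fin nV × Xc × Yc × Zc)] :
    distOf (condPMF (fun ω : Fin nU × Fin nV × Xc × Yc × Zc =>
        QUVX (ω.1, ω.2.1, ω.2.2.1) * Q ω.2.2.1 (ω.2.2.2.1, ω.2.2.2.2)) (fun ω => ω.1) u)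
      (fun ω => ω.2)
    = fun w : Fin nV × Xc × Yc × Zc =>
        (QUVX (u, w.1, w.2.1) / distOf (fun ω : Fin nU × Fin nV × Xc × Yc × Zc =>
            QUVX (ω.1, ω.2.1, ω.2.2.1) * Q ω.2.2.1 (ω.2.2.2.1, ω.2.2.2.2)) (fun ω => ω.1) u)
          * Q w.2.1 (w.2.2.1, w.2.2.2) := by
  funext w
  rw [show (distOf (condPMF (fun ω : Fin nU × Fin nV × Xc × Yc × Zc =>
        QUVX (ω.1, ω.2.1, ω.2.2.1) * Q ω.2.2.1 (ω.2.2.2.1, ω.2.2.2.2)) (fun ω => ω.1) u)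
      (fun ω => ω.2) w) = ∑ u' : Fin nU, ∑ w' : Fin nV × Xc × Yc × Zc,
        if w' = w then (if u' = u then (QUVX (u', w'.1, w'.2.1) * Q w'.2.1 (w'.2.2.1, w'.2.2.2))
          / distOf (fun ω : Fin nU × Fin nV × Xc × Yc × Zc =>
            QUVX (ω.1, ω.2.1, ω.2.2.1) * Q ω.2.2.1 (ω.2.2.2.1, ω.2.2.2.2)) (fun ω => ω.1) u
          else 0) else 0 from by
    rw [distOf, Fintype.sum_prod_type]
    rfl]
  simp only [Finset.sum_ite_eq' Finset.univ]
  simp [mul_div_right_comm]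

-- direction 1: every conditional value is dominated by an unconditional one
lemma dir1 {nU nV : ℕ} (Q : Xc → Yc × Zc → ℝ) (hQ : ∀ x, IsDist (Q x))
    (QUVX : Fin nU × Fin nV × Xc → ℝ) (hd : IsDist QUVX) :
    ∃ (nV' : ℕ) (QVX : Fin nV' × Xc → ℝ), IsDist QVX ∧
      cmiRV (fun ω : Fin nU × Fin nV × Xc × Yc × Zc =>
            QUVX (ω.1, ω.2.1, ω.2.2.1) * Q ω.2.2.1 (ω.2.2.2.1, ω.2.2.2.2))
          (fun ω => ω.2.1) (fun ω => ω.2.2.2.1) (fun ω => ω.1)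
        - cmiRV (fun ω : Fin nU × Fin nV × Xc × Yc × Zc =>
            QUVX (ω.1, ω.2.1, ω.2.2.1) * Q ω.2.2.1 (ω.2.2.2.1, ω.2.2.2.2))
          (fun ω => ω.2.1) (fun ω => ω.2.2.2.2) (fun ω => ω.1)
      ≤ miRV (fun ω : Fin nV' × Xc × Yc × Zc =>
            QVX (ω.1, ω.2.1) * Q ω.2.1 (ω.2.2.1, ω.2.2.2))
          (fun ω => ω.1) (fun ω => ω.2.2.1)
        - miRV (fun ω : Fin nV' × Xc × Yc × Zc =>
            QVX (ω.1, ω.2.1) * Q ω.2.1 (ω.2.2.1, ω.2.2.2))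
          (fun ω => ω.1) (fun ω => ω.2.2.2) := by
  classical
  set p : Fin nU × Fin nV × Xc × Yc × Zc → ℝ := fun ω =>
    QUVX (ω.1, ω.2.1, ω.2.2.1) * Q ω.2.2.1 (ω.2.2.2.1, ω.2.2.2.2) with hp
  set P : Fin nU → ℝ := distOf p (fun ω => ω.1) with hP
  set g : Fin nU → ℝ := fun u =>
    miRV (condPMF p (fun ω => ω.1) u) (fun ω => ω.2.1) (fun ω => ω.2.2.2.1)
      - miRV (condPMF p (fun ω => ω.1) u) (fun ω => ω.2.1) (fun ω => ω.2.2.2.2) with hg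
  have hPnn : ∀ u, 0 ≤ P u :=
    distOf_nonneg _ (fun ω => mul_nonneg (hd.1 _) ((hQ _).1 _)) _
  have hPsum : ∑ u, P u = 1 := by
    rw [hP, hp, Finset.sum_congr rfl fun u _ => pu_eq Q hQ QUVX u]
    have h2 := hd.2
    rw [Fintype.sum_prod_type] at h2
    simpa using h2
  have hex : ∃ u, P u ≠ 0 := by
    by_contra h
    push_neg at h
    rw [Finset.sum_eq_zero (fun u _ => h u)] at hPsum
    exact zero_ne_one hPsum
  obtain ⟨u0, hu0⟩ := hex
  obtain ⟨us, husS, hmax⟩ := Finset.exists_max_image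
    (Finset.univ.filter (fun u => P u ≠ 0)) g ⟨u0, by simp [hu0]⟩
  have hPus : P us ≠ 0 := (Finset.mem_filter.mp husS).2
  refine ⟨nV, fun t => QUVX (us, t.1, t.2) / P us, ⟨fun t => div_nonneg (hd.1 _) (hPnn us), ?_⟩, ?_⟩
  · rw [← Finset.sum_div]
    rw [div_eq_one_iff_eq hPus, hP, hp, pu_eq Q hQ QUVX us]
  · have ha : cmiRV p (fun ω => ω.2.1) (fun ω => ω.2.2.2.1) (fun ω => ω.1)
        - cmiRV p (fun ω => ω.2.1) (fun ω => ω.2.2.2.2) (fun ω => ω.1)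
        = ∑ u, P u * g u := by
      simp only [cmiRV, hg, ← Finset.sum_sub_distrib, mul_sub, hP]
    rw [ha]
    have hle : ∑ u, P u * g u ≤ g us := by
      calc ∑ u, P u * g u ≤ ∑ u, P u * g us := by
            refine Finset.sum_le_sum fun u _ => ?_
            by_cases h : P u = 0
            · simp [h]
            · exact mul_le_mul_of_nonneg_left (hmax u (by simp [h])) (hPnn u)
        _ = g us := by rw [← Finset.sum_mul, hPsum, one_mul]
    refine hle.trans (le_of_eq ?_)
    have hpushs := cond_push Q QUVX us
    rw [← hp, ← hP] at hpushs
    have e1 : miRV (condPMF p (fun ω => ω.1) us) (fun ω => ω.2.1) (fun ω => ω.2.2.2.1)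
        = miRV (fun w : Fin nV × Xc × Yc × Zc =>
              (QUVX (us, w.1, w.2.1) / P us) * Q w.2.1 (w.2.2.1, w.2.2.2))
            (fun w => w.1) (fun w => w.2.2.1) := by
      rw [← hpushs]
      exact miRV_map (condPMF p (fun ω => ω.1) us) (fun ω => ω.2)
        (fun w => w.1) (fun w => w.2.2.1)
    have e2 : miRV (condPMF p (fun ω => ω.1) us) (fun ω => ω.2.1) (fun ω => ω.2.2.2.2)
        = miRV (fun w : Fin nV × Xc × Yc × Zc =>
              (QUVX (us, w.1, w.2.1) / P us) * Q w.2.1 (w.2.2.1, w.2.2.2))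
            (fun w => w.1) (fun w => w.2.2.2) := by
      rw [← hpushs]
      exact miRV_map (condPMF p (fun ω => ω.1) us) (fun ω => ω.2)
        (fun w => w.1) (fun w => w.2.2.2)
    have hfun : (fun ω : Fin nV × Xc × Yc × Zc =>
          (fun t : Fin nV × Xc => QUVX (us, t.1, t.2) / P us) (ω.1, ω.2.1)
            * Q ω.2.1 (ω.2.2.1, ω.2.2.2))
        = fun w : Fin nV × Xc × Yc × Zc =>
            (QUVX (us, w.1, w.2.1) / P us) * Q w.2.1 (w.2.2.1, w.2.2.2) := rfl
    rw [hg]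
    simp only [hfun]
    rw [← e1, ← e2]

lemma dir2 {nV : ℕ} (Q : Xc → Yc × Zc → ℝ) (hQ : ∀ x, IsDist (Q x))
    (QVX : Fin nV × Xc → ℝ) (hd : IsDist QVX) :
    ∃ (QUVX : Fin 1 × Fin nV × Xc → ℝ), IsDist QUVX ∧
      miRV (fun ω : Fin nV × Xc × Yc × Zc =>
            QVX (ω.1, ω.2.1) * Q ω.2.1 (ω.2.2.1, ω.2.2.2))
          (fun ω => ω.1) (fun ω => ω.2.2.1)
        - miRV (fun ω : Fin nV × Xc × Yc × Zc =>
            QVX (ω.1, ω.2.1) * Q ω.2.1 (ω.2.2.1, ω.2.2.2))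
          (fun ω => ω.1) (fun ω => ω.2.2.2)
      = cmiRV (fun ω : Fin 1 × Fin nV × Xc × Yc × Zc =>
            QUVX (ω.1, ω.2.1, ω.2.2.1) * Q ω.2.2.1 (ω.2.2.2.1, ω.2.2.2.2))
          (fun ω => ω.2.1) (fun ω => ω.2.2.2.1) (fun ω => ω.1)
        - cmiRV (fun ω : Fin 1 × Fin nV × Xc × Yc × Zc =>
            QUVX (ω.1, ω.2.1, ω.2.2.1) * Q ω.2.2.1 (ω.2.2.2.1, ω.2.2.2.2))
          (fun ω => ω.2.1) (fun ω => ω.2.2.2.2) (fun ω => ω.1) := by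
  classical
  set QU : Fin 1 × Fin nV × Xc → ℝ := fun t => QVX t.2 with hQU
  refine ⟨QU, ⟨fun t => hd.1 t.2, ?_⟩, ?_⟩
  · rw [hQU, Fintype.sum_prod_type]
    simp [hd.2]
  · set p : Fin 1 × Fin nV × Xc × Yc × Zc → ℝ := fun ω =>
      QU (ω.1, ω.2.1, ω.2.2.1) * Q ω.2.2.1 (ω.2.2.2.1, ω.2.2.2.2) with hp
    have hPu1 : distOf p (fun ω => ω.1) 0 = 1 := by
      rw [hp, pu_eq Q hQ QU 0]
      simp only [hQU]
      simpa using hd.2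
    have hcond1 : condPMF p (fun ω => ω.1) 0 = p := by
      funext ω
      have h0 : ω.1 = 0 := Subsingleton.elim _ _
      simp [condPMF, hPu1, h0]
    have hcmiY : cmiRV p (fun ω => ω.2.1) (fun ω => ω.2.2.2.1) (fun ω => ω.1)
        = miRV p (fun ω => ω.2.1) (fun ω => ω.2.2.2.1) := by
      simp only [cmiRV]
      rw [Fin.sum_univ_one, hPu1, hcond1, one_mul]
    have hcmiZ : cmiRV p (fun ω => ω.2.1) (fun ω => ω.2.2.2.2) (fun ω => ω.1)
        = miRV p (fun ω => ω.2.1) (fun ω => ω.2.2.2.2) := by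
      simp only [cmiRV]
      rw [Fin.sum_univ_one, hPu1, hcond1, one_mul]
    rw [hcmiY, hcmiZ]
    have hpush : distOf p (fun ω => ω.2)
        = fun w : Fin nV × Xc × Yc × Zc => QVX (w.1, w.2.1) * Q w.2.1 (w.2.2.1, w.2.2.2) := by
      funext w
      rw [hp]
      rw [show distOf (fun ω : Fin 1 × Fin nV × Xc × Yc × Zc =>
            QU (ω.1, ω.2.1, ω.2.2.1) * Q ω.2.2.1 (ω.2.2.2.1, ω.2.2.2.2)) (fun ω => ω.2) w
          = ∑ u : Fin 1, ∑ w' : Fin nV × Xc × Yc × Zc,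
              if w' = w then QU (u, w'.1, w'.2.1) * Q w'.2.1 (w'.2.2.1, w'.2.2.2) else 0 from by
        rw [distOf, Fintype.sum_prod_type]]
      simp only [Finset.sum_ite_eq' Finset.univ, Finset.mem_univ, if_true]
      simp [hQU]
    rw [← hpush]
    exact (congrArg₂ (· - ·)
      (miRV_map p (fun ω => ω.2) (fun w => w.1) (fun w => w.2.2.1))
      (miRV_map p (fun ω => ω.2) (fun w => w.1) (fun w => w.2.2.2))).symm

end main

/-- step (c) of the converse.  For a fixed channel `Q_{YZ|X}`,
`max_{Q_{UVX}} [I(V;Y|U) − I(V;Z|U)] = max_{Q_{VX}} [I(V;Y) − I(V;Z)]`, where on the left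
`(U,V,X,Y,Z) ~ Q_{UVX}(u,v,x)·Q_{YZ|X}(y,z|x)` (so `(U,V) − X − (Y,Z)` is a Markov chain)
with `U`, `V` on finite auxiliary alphabets of arbitrary finite cardinality, and on the
right `(V,X,Y,Z) ~ Q_{VX}(v,x)·Q_{YZ|X}(y,z|x)`. -/
theorem stmt8 {Xc Yc Zc : Type*} [Fintype Xc] [Fintype Yc] [Fintype Zc]
    [DecidableEq Yc] [DecidableEq Zc]
    (Q : Xc → Yc × Zc → ℝ) (hQ : ∀ x, IsDist (Q x)) :
    sSup { r : ℝ | ∃ (nU nV : ℕ) (QUVX : Fin nU × Fin nV × Xc → ℝ), IsDist QUVX ∧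
        r = cmiRV (fun ω : Fin nU × Fin nV × Xc × Yc × Zc =>
                QUVX (ω.1, ω.2.1, ω.2.2.1) * Q ω.2.2.1 (ω.2.2.2.1, ω.2.2.2.2))
              (fun ω => ω.2.1) (fun ω => ω.2.2.2.1) (fun ω => ω.1)
          - cmiRV (fun ω : Fin nU × Fin nV × Xc × Yc × Zc =>
                QUVX (ω.1, ω.2.1, ω.2.2.1) * Q ω.2.2.1 (ω.2.2.2.1, ω.2.2.2.2))
              (fun ω => ω.2.1) (fun ω => ω.2.2.2.2) (fun ω => ω.1) }
      = sSup { r : ℝ | ∃ (nV : ℕ) (QVX : Fin nV × Xc → ℝ), IsDist QVX ∧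
          r = miRV (fun ω : Fin nV × Xc × Yc × Zc =>
                  QVX (ω.1, ω.2.1) * Q ω.2.1 (ω.2.2.1, ω.2.2.2))
                (fun ω => ω.1) (fun ω => ω.2.2.1)
            - miRV (fun ω : Fin nV × Xc × Yc × Zc =>
                  QVX (ω.1, ω.2.1) * Q ω.2.1 (ω.2.2.1, ω.2.2.2))
                (fun ω => ω.1) (fun ω => ω.2.2.2) } := by
  apply sSup_eq_sSup_of
  · rintro a ⟨nU, nV, QUVX, hd, rfl⟩
    obtain ⟨nV', QVX, hd', hle⟩ := dir1 Q hQ QUVX hd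
    exact ⟨_, ⟨nV', QVX, hd', rfl⟩, hle⟩
  · rintro b ⟨nV, QVX, hd, rfl⟩
    obtain ⟨QUVX, hd', heq⟩ := dir2 Q hQ QVX hd
    exact ⟨1, nV, QUVX, hd', heq⟩
end
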